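/- Let G = H₁ × ⋯ × Hₘ be a direct product of finite groups whose orders are pairwise coprime. Then α(G) = max_i α(Hᵢ). -/

import Mathlib

/-!
Coprimality forces every automorphism of `∏ Hᵢ` to be a product of automorphisms of the factors:
an element trivial in the `i`-th coordinate has order coprime to `|Hᵢ|`, so every automorphism
keeps it trivial in the `i`-th coordinate. Hence a set is determining as soon as each of its
coordinate projections is, and `max_i α(Hᵢ)` tuples whose `i`-th coordinates run through a
minimum determining set of `Hᵢ` determine the product. Conversely, the `i`-th projection of a
determining set of the product is determining for `Hᵢ`, because every automorphism of `Hᵢ`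
extends to the product by the identity on the other factors.
-/

/-- A subset `D` of a group `G` is a determining set if the only automorphism of `G`
fixing every element of `D` is the identity. -/
def IsDetermining {G : Type*} [Group G] (D : Set G) : Prop :=
  ∀ φ : G ≃* G, (∀ x ∈ D, φ x = x) → φ = MulEquiv.refl G

/-- The determining number: the minimum size of a (finite) determining set. -/
noncomputable def detNumber (G : Type*) [Group G] : ℕ :=
  sInf {n | ∃ D : Finset G, D.card = n ∧ IsDetermining (D : Set G)}

/-- The generating number: the minimum size of a (finite) generating set. -/
noncomputable def genNumber (G : Type*) [Group G] : ℕ :=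
  sInf {n | ∃ D : Finset G, D.card = n ∧ Subgroup.closure (D : Set G) = ⊤}

theorem Finset.exists_subset_range_of_card_le {α : Type*} [Nonempty α] (s : Finset α) {n : ℕ}
    (h : s.card ≤ n) : ∃ e : Fin n → α, ↑s ⊆ Set.range e := by
  classical
  refine ⟨Function.extend (Fin.castLE h) (fun k => s.equivFin.symm k)
    fun _ => Classical.arbitrary α, fun a ha => ⟨Fin.castLE h (s.equivFin ⟨a, ha⟩), ?_⟩⟩
  rw [(Fin.castLE_injective h).extend_apply, Equiv.symm_apply_apply]

theorem MonoidHom.map_eq_one_of_coprime {G K : Type*} [Group G] [Group K] (f : G →* K) {x : G}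
    (hx : (orderOf x).Coprime (Nat.card K)) : f x = 1 :=
  orderOf_eq_one_iff.mp <|
    Nat.eq_one_of_dvd_coprimes hx (orderOf_map_dvd f x) (orderOf_dvd_natCard (f x))

theorem exists_finset_card_eq_detNumber (G : Type*) [Group G] [Finite G] :
    ∃ D : Finset G, D.card = detNumber G ∧ IsDetermining (D : Set G) := by
  have := Fintype.ofFinite G
  exact Nat.sInf_mem (s := {n | ∃ D : Finset G, D.card = n ∧ IsDetermining (D : Set G)})
    ⟨_, Finset.univ, rfl, fun φ hφ => MulEquiv.ext fun x => hφ x (by simp)⟩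

theorem IsDetermining.mono {G : Type*} [Group G] {D E : Set G} (hD : IsDetermining D)
    (h : D ⊆ E) : IsDetermining E :=
  fun φ hφ => hD φ fun x hx => hφ x (h hx)

theorem detNumber_le_card {G : Type*} [Group G] {D : Finset G} (hD : IsDetermining (D : Set G)) :
    detNumber G ≤ D.card :=
  Nat.sInf_le ⟨D, rfl, hD⟩

section Pi

variable {ι : Type*} {H : ι → Type*} [∀ i, Group (H i)]

theorem IsDetermining.image_eval {S : Set (∀ i, H i)} (hS : IsDetermining S) (i : ι) :
    IsDetermining (Function.eval i '' S) := by
  classical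
  intro ψ hψ
  have hext : MulEquiv.piCongrRight (Pi.mulSingle i ψ) = MulEquiv.refl _ := by
    refine hS _ fun g hg => funext fun j => ?_
    rcases eq_or_ne j i with rfl | hji
    · simpa using hψ (g j) ⟨g, hg, rfl⟩
    · simp [Pi.mulSingle_eq_of_ne hji]
  ext a
  simpa using congrFun (DFunLike.congr_fun hext (Pi.mulSingle i a)) i

theorem detNumber_le_detNumber_pi [Finite (∀ i, H i)] (i : ι) :
    detNumber (H i) ≤ detNumber (∀ i, H i) := by
  classical
  obtain ⟨S, hS, hdet⟩ := exists_finset_card_eq_detNumber (∀ i, H i)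
  calc detNumber (H i) ≤ (S.image (Function.eval i)).card :=
        detNumber_le_card (by simpa using hdet.image_eval i)
    _ ≤ S.card := Finset.card_image_le
    _ = detNumber (∀ i, H i) := hS

variable [Fintype ι]
  (hcop : Pairwise fun i j => (Nat.card (H i)).Coprime (Nat.card (H j)))
include hcop

theorem apply_eq_one_of_coprime {F : Type*} [FunLike F (∀ i, H i) (∀ i, H i)]
    [MonoidHomClass F (∀ i, H i) (∀ i, H i)] (φ : F) {g : ∀ i, H i} {i : ι}
    (hg : g i = 1) : φ g i = 1 := by
  classical
  set N := ∏ j ∈ Finset.univ.erase i, Nat.card (H j)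
  have hgN : g ^ N = 1 := funext fun j => by
    rcases eq_or_ne j i with rfl | hji
    · simp [hg]
    · exact orderOf_dvd_iff_pow_eq_one.mp <| (orderOf_dvd_natCard (g j)).trans <|
        Finset.dvd_prod_of_mem _ (Finset.mem_erase.mpr ⟨hji, Finset.mem_univ j⟩)
  have hN : N.Coprime (Nat.card (H i)) :=
    Nat.Coprime.prod_left fun j hj => hcop (Finset.ne_of_mem_erase hj)
  exact ((Pi.evalMonoidHom H i).comp (φ : (∀ i, H i) →* ∀ i, H i)).map_eq_one_of_coprime
    (hN.coprime_dvd_left (orderOf_dvd_of_pow_eq_one hgN))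

theorem apply_eq_apply_mulSingle [DecidableEq ι] {F : Type*} [FunLike F (∀ i, H i) (∀ i, H i)]
    [MonoidHomClass F (∀ i, H i) (∀ i, H i)] (φ : F) (g : ∀ i, H i) (i : ι) :
    φ g i = φ (Pi.mulSingle i (g i)) i := by
  have h := apply_eq_one_of_coprime hcop φ (i := i) (g := g * (Pi.mulSingle i (g i))⁻¹)
    (by simp)
  rwa [map_mul, map_inv, Pi.mul_apply, Pi.inv_apply, mul_inv_eq_one] at h

theorem exists_eq_piCongrRight (φ : (∀ i, H i) ≃* ∀ i, H i) :
    ∃ ψ : ∀ i, MulAut (H i), φ = MulEquiv.piCongrRight ψ := by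
  classical
  let restrict (φ : (∀ i, H i) ≃* ∀ i, H i) (i : ι) : H i →* H i :=
    (Pi.evalMonoidHom H i).comp (φ.toMonoidHom.comp (MonoidHom.mulSingle H i))
  have restrict_comp (φ ψ : (∀ i, H i) ≃* ∀ i, H i) (i : ι) :
      (restrict ψ i).comp (restrict φ i) = restrict (φ.trans ψ) i := by
    ext a
    exact (apply_eq_apply_mulSingle hcop ψ (φ (Pi.mulSingle i a)) i).symm
  refine ⟨fun i => (restrict φ i).toMulEquiv (restrict φ.symm i) ?_ ?_, ?_⟩
  · rw [restrict_comp, MulEquiv.self_trans_symm]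
    ext a
    exact Pi.mulSingle_eq_same i a
  · rw [restrict_comp, MulEquiv.symm_trans_self]
    ext a
    exact Pi.mulSingle_eq_same i a
  · ext g i
    exact apply_eq_apply_mulSingle hcop φ g i

theorem isDetermining_of_forall_isDetermining_image_eval {S : Set (∀ i, H i)}
    (hS : ∀ i, IsDetermining (Function.eval i '' S)) : IsDetermining S := by
  intro φ hφ
  obtain ⟨ψ, rfl⟩ := exists_eq_piCongrRight hcop φ
  obtain rfl : ψ = fun i => MulEquiv.refl (H i) := funext fun i =>
    hS i (ψ i) fun _ ⟨g, hg, hgi⟩ => hgi ▸ congrFun (hφ g hg) i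
  rfl

theorem detNumber_pi_le_sup [∀ i, Finite (H i)] :
    detNumber (∀ i, H i) ≤ Finset.univ.sup fun i => detNumber (H i) := by
  classical
  choose D hDcard hD using fun i => exists_finset_card_eq_detNumber (H i)
  set n := Finset.univ.sup fun i => detNumber (H i)
  have hDn (i : ι) : (D i).card ≤ n :=
    (hDcard i).trans_le (Finset.le_sup (f := fun i => detNumber (H i)) (Finset.mem_univ i))
  choose e he using fun i => (D i).exists_subset_range_of_card_le (hDn i)
  let S : Finset (∀ i, H i) := Finset.univ.image fun k : Fin n => fun i => e i k
  have hS : IsDetermining (S : Set (∀ i, H i)) :=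
    isDetermining_of_forall_isDetermining_image_eval hcop fun i => (hD i).mono fun d hd => by
      obtain ⟨k, rfl⟩ := he i hd
      exact ⟨fun i => e i k, by simp [S], rfl⟩
  calc detNumber (∀ i, H i) ≤ S.card := detNumber_le_card hS
    _ ≤ n := Finset.card_image_le.trans (by simp)

end Pi

theorem stmt8 {m : ℕ} (H : Fin m → Type*) [∀ i, Group (H i)]
    [∀ i, Finite (H i)]
    (hcop : ∀ i j, i ≠ j → Nat.Coprime (Nat.card (H i)) (Nat.card (H j))) :
    detNumber (∀ i, H i) = Finset.univ.sup fun i => detNumber (H i) :=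
  le_antisymm (detNumber_pi_le_sup hcop)
    (Finset.sup_le fun i _ => detNumber_le_detNumber_pi i)
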